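/- Let 1 ≤ p < ∞, δ > 0, and f : ℝ → ℂ continuously differentiable with f, f' ∈ L^p(ℝ). Let μ be a positive Borel measure on ℝ with M(δ) := sup_{x∈ℝ} μ([x, x+δ)) < ∞. Then ∫_ℝ |f|^p dμ ≤ M(δ) · (δ^{-1/p} ‖f‖_p + δ^{1-1/p} ‖f'‖_p)^p. -/

import Mathlib

/-!
On `I = [a, b)`, `‖f‖` is at most its value at a point where `‖f‖ ^ p` lies below its average,
plus `∫_I ‖f'‖`; Hölder on `I` bounds the latter, so that
`sup_I ‖f‖ ≤ |I| ^ (-1/p) ‖f‖_{L^p(I)} + |I| ^ (1 - 1/p) ‖f'‖_{L^p(I)}`.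
Splitting `ℝ` into the intervals `[kδ, (k+1)δ)` and applying Minkowski's inequality in `ℓ^p(ℤ)`
gives the sampling inequality `∑ₖ sup ‖f‖ ^ p ≤ (δ ^ (-1/p) ‖f‖_p + δ ^ (1-1/p) ‖f'‖_p) ^ p`,
and `∫ ‖f‖ ^ p dμ ≤ ∑ₖ μ [kδ, (k+1)δ) · sup ‖f‖ ^ p` with `μ [kδ, (k+1)δ) ≤ M(δ)`.
-/

open MeasureTheory Set
open scoped ENNReal NNReal

namespace ENNReal

theorem Lp_add_le_tsum {ι : Type*} {f g : ι → ℝ≥0∞} {p : ℝ} (hp : 1 ≤ p) :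
    (∑' i, (f i + g i) ^ p) ^ (1 / p) ≤
      (∑' i, f i ^ p) ^ (1 / p) + (∑' i, g i ^ p) ^ (1 / p) := by
  have hp0 : 0 < p := zero_lt_one.trans_le hp
  rw [one_div, ENNReal.rpow_inv_le_iff hp0, ENNReal.tsum_eq_iSup_sum]
  refine iSup_le fun s => ?_
  rw [← ENNReal.rpow_inv_le_iff hp0, ← one_div]
  calc (∑ i ∈ s, (f i + g i) ^ p) ^ (1 / p)
      ≤ (∑ i ∈ s, f i ^ p) ^ (1 / p) + (∑ i ∈ s, g i ^ p) ^ (1 / p) := Lp_add_le s f g hp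
    _ ≤ _ := by gcongr <;> exact ENNReal.sum_le_tsum s

end ENNReal

section Partition

variable {α ι : Type*} [MeasurableSpace α] [Countable ι] {μ : Measure α} {s : ι → Set α}

theorem lintegral_le_tsum_iSup_mul_measure (hsm : ∀ i, MeasurableSet (s i))
    (hs : ⋃ i, s i = univ) (g : α → ℝ≥0∞) :
    ∫⁻ x, g x ∂μ ≤ ∑' i, (⨆ x ∈ s i, g x) * μ (s i) := by
  rw [← setLIntegral_univ, ← hs]
  refine (lintegral_iUnion_le s g).trans (ENNReal.tsum_le_tsum fun i => ?_)
  rw [← setLIntegral_const]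
  exact setLIntegral_mono' (hsm i) fun x hx => le_iSup₂ (f := fun x (_ : x ∈ s i) => g x) x hx

theorem tsum_eLpNorm_restrict_rpow {ε : Type*} [ENorm ε] (hsm : ∀ i, MeasurableSet (s i))
    (hd : Pairwise (Function.onFun Disjoint s)) (hs : ⋃ i, s i = univ) {p : ℝ≥0} (hp : p ≠ 0)
    (f : α → ε) :
    ∑' i, eLpNorm f p (μ.restrict (s i)) ^ (p : ℝ) = eLpNorm f p μ ^ (p : ℝ) := by
  simp_rw [eLpNorm_nnreal_pow_eq_lintegral hp]
  rw [← lintegral_iUnion hsm hd, hs, Measure.restrict_univ]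

end Partition

section Sampling

variable {E : Type*} [NormedAddCommGroup E] [NormedSpace ℝ E] [CompleteSpace E]

theorem enorm_sub_le_setLIntegral_enorm_deriv {f : ℝ → E} (hf : ContDiff ℝ 1 f) {s : Set ℝ}
    (hs : s.OrdConnected) {x y : ℝ} (hx : x ∈ s) (hy : y ∈ s) :
    ‖f x - f y‖ₑ ≤ ∫⁻ t in s, ‖deriv f t‖ₑ := by
  have hderiv : ∀ t, HasDerivAt f (deriv f t) t := fun t =>
    (hf.differentiable one_ne_zero t).hasDerivAt
  rw [← intervalIntegral.integral_eq_sub_of_hasDerivAt (fun t _ => hderiv t)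
    ((hf.continuous_deriv le_rfl).intervalIntegrable y x), ← ofReal_norm,
    intervalIntegral.norm_integral_eq_norm_integral_uIoc, ofReal_norm]
  exact (enorm_integral_le_lintegral_enorm _).trans
    (lintegral_mono_set (uIoc_subset_uIcc.trans (hs.uIcc_subset hy hx)))

theorem enorm_le_eLpNorm_add_eLpNorm_deriv_of_mem_Ico {p : ℝ≥0} (hp : 1 ≤ p) {f : ℝ → E}
    (hf : ContDiff ℝ 1 f) {a b x : ℝ} (hx : x ∈ Ico a b) :
    ‖f x‖ₑ ≤ ENNReal.ofReal (b - a) ^ (-1 / p : ℝ) * eLpNorm f p (volume.restrict (Ico a b)) +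
      ENNReal.ofReal (b - a) ^ (1 - 1 / p : ℝ) *
        eLpNorm (deriv f) p (volume.restrict (Ico a b)) := by
  set L := ENNReal.ofReal (b - a)
  have hp0 : (0 : ℝ) < p := zero_lt_one.trans_le hp
  have hL : volume (Ico a b) = L := Real.volume_Ico
  have hL0 : L ≠ 0 := by simpa [L] using hx.1.trans_lt hx.2
  obtain ⟨y, hy, hfy⟩ := exists_le_setLAverage (hL ▸ hL0) (hL ▸ ENNReal.ofReal_ne_top)
    (hf.continuous.enorm.measurable.pow_const (p : ℝ)).aemeasurable
  rw [setLAverage_eq, ← eLpNorm_nnreal_pow_eq_lintegral (by positivity), hL] at hfy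
  have hfy_le : ‖f y‖ₑ ≤ L ^ (-1 / p : ℝ) * eLpNorm f p (volume.restrict (Ico a b)) := by
    rw [← ENNReal.rpow_le_rpow_iff hp0, ENNReal.mul_rpow_of_nonneg _ _ hp0.le, ← ENNReal.rpow_mul,
      div_mul_cancel₀ _ hp0.ne', ENNReal.rpow_neg_one, mul_comm, ← div_eq_mul_inv]
    exact hfy
  have hderiv : ∫⁻ t in Ico a b, ‖deriv f t‖ₑ ≤
      L ^ (1 - 1 / p : ℝ) * eLpNorm (deriv f) p (volume.restrict (Ico a b)) := by
    have := eLpNorm_le_eLpNorm_mul_rpow_measure_univ (μ := volume.restrict (Ico a b))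
      (ENNReal.one_le_coe_iff.2 hp) (hf.continuous_deriv le_rfl).aestronglyMeasurable
    rwa [eLpNorm_one_eq_lintegral_enorm, Measure.restrict_apply_univ, hL, ENNReal.toReal_one,
      ENNReal.coe_toReal, div_one, mul_comm] at this
  calc ‖f x‖ₑ = ‖f y + (f x - f y)‖ₑ := by rw [add_sub_cancel]
    _ ≤ ‖f y‖ₑ + ∫⁻ t in Ico a b, ‖deriv f t‖ₑ := (enorm_add_le _ _).trans <| by
      gcongr; exact enorm_sub_le_setLIntegral_enorm_deriv hf ordConnected_Ico hx hy
    _ ≤ _ := add_le_add hfy_le hderiv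

theorem tsum_iSup_Ico_zsmul_enorm_rpow_le {p : ℝ≥0} (hp : 1 ≤ p) {δ : ℝ} (hδ : 0 < δ)
    {f : ℝ → E} (hf : ContDiff ℝ 1 f) :
    ∑' k : ℤ, ⨆ x ∈ Ico (k • δ) ((k + 1) • δ), ‖f x‖ₑ ^ (p : ℝ) ≤
      (ENNReal.ofReal δ ^ (-1 / p : ℝ) * eLpNorm f p +
        ENNReal.ofReal δ ^ (1 - 1 / p : ℝ) * eLpNorm (deriv f) p) ^ (p : ℝ) := by
  set I : ℤ → Set ℝ := fun k => Ico (k • δ) ((k + 1) • δ)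
  have hp0 : (0 : ℝ) < p := zero_lt_one.trans_le hp
  have hsup : ∀ k, ⨆ x ∈ I k, ‖f x‖ₑ ^ (p : ℝ) ≤
      (ENNReal.ofReal δ ^ (-1 / p : ℝ) * eLpNorm f p (volume.restrict (I k)) +
        ENNReal.ofReal δ ^ (1 - 1 / p : ℝ) * eLpNorm (deriv f) p (volume.restrict (I k))) ^
          (p : ℝ) :=
    fun k => iSup₂_le fun x hx => by
      have hlen : (k + 1) • δ - k • δ = δ := by rw [add_one_zsmul, add_sub_cancel_left]
      gcongr
      simpa only [hlen] using enorm_le_eLpNorm_add_eLpNorm_deriv_of_mem_Ico hp hf hx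
  have hscale : ∀ (c : ℝ≥0∞) (g : ℝ → E),
      (∑' k, (c * eLpNorm g p (volume.restrict (I k))) ^ (p : ℝ)) ^ (1 / p : ℝ) =
        c * eLpNorm g p := by
    intro c g
    simp_rw [ENNReal.mul_rpow_of_nonneg _ _ hp0.le]
    rw [ENNReal.tsum_mul_left, tsum_eLpNorm_restrict_rpow (fun _ => measurableSet_Ico)
      (pairwise_disjoint_Ico_zsmul δ) (iUnion_Ico_zsmul hδ) (by positivity),
      ← ENNReal.mul_rpow_of_nonneg _ _ hp0.le, ← ENNReal.rpow_mul, mul_one_div_cancel hp0.ne',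
      ENNReal.rpow_one]
  refine (ENNReal.tsum_le_tsum hsup).trans ?_
  rw [← ENNReal.rpow_inv_le_iff hp0, ← one_div, ← hscale, ← hscale]
  exact ENNReal.Lp_add_le_tsum hp

theorem lintegral_enorm_rpow_le_iSup_measure_Ico_mul {p : ℝ≥0} (hp : 1 ≤ p) {δ : ℝ} (hδ : 0 < δ)
    {f : ℝ → E} (hf : ContDiff ℝ 1 f) (μ : Measure ℝ) :
    ∫⁻ x, ‖f x‖ₑ ^ (p : ℝ) ∂μ ≤ (⨆ x : ℝ, μ (Ico x (x + δ))) *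
      (ENNReal.ofReal δ ^ (-1 / p : ℝ) * eLpNorm f p +
        ENNReal.ofReal δ ^ (1 - 1 / p : ℝ) * eLpNorm (deriv f) p) ^ (p : ℝ) := by
  calc ∫⁻ x, ‖f x‖ₑ ^ (p : ℝ) ∂μ
      ≤ ∑' k : ℤ, (⨆ x ∈ Ico (k • δ) ((k + 1) • δ), ‖f x‖ₑ ^ (p : ℝ)) *
          μ (Ico (k • δ) ((k + 1) • δ)) :=
        lintegral_le_tsum_iSup_mul_measure (fun _ => measurableSet_Ico) (iUnion_Ico_zsmul hδ) _
    _ ≤ ∑' k : ℤ, (⨆ x ∈ Ico (k • δ) ((k + 1) • δ), ‖f x‖ₑ ^ (p : ℝ)) *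
          ⨆ x : ℝ, μ (Ico x (x + δ)) := ENNReal.tsum_le_tsum fun k => by
        gcongr
        exact add_one_zsmul δ k ▸ le_iSup (fun x => μ (Ico x (x + δ))) (k • δ)
    _ ≤ _ := by
        rw [ENNReal.tsum_mul_right, mul_comm]
        gcongr
        exact tsum_iSup_Ico_zsmul_enorm_rpow_le hp hδ hf

end Sampling

theorem measure_integral_bound_of_deriv (p δ : ℝ) (hp : 1 ≤ p) (hδ : 0 < δ)
    (f : ℝ → ℂ) (hf : ContDiff ℝ 1 f)
    (hfp : MemLp f (ENNReal.ofReal p) volume)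
    (hf'p : MemLp (deriv f) (ENNReal.ofReal p) volume)
    (μ : Measure ℝ) (hfin : (⨆ x : ℝ, μ (Set.Ico x (x + δ))) ≠ ⊤) :
    ∫ x : ℝ, ‖f x‖ ^ p ∂μ ≤
      (⨆ x : ℝ, μ (Set.Ico x (x + δ))).toReal *
        (δ ^ (-1 / p) * (eLpNorm f (ENNReal.ofReal p) volume).toReal +
          δ ^ (1 - 1 / p) * (eLpNorm (deriv f) (ENNReal.ofReal p) volume).toReal) ^ p := by
  lift p to ℝ≥0 using zero_le_one.trans hp
  rw [ENNReal.ofReal_coe_nnreal] at hfp hf'p ⊢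
  have hbound := lintegral_enorm_rpow_le_iSup_measure_Ico_mul (NNReal.one_le_coe.1 hp) hδ hf μ
  have hnorm : ∫ x, ‖f x‖ ^ (p : ℝ) ∂μ = (∫⁻ x, ‖f x‖ₑ ^ (p : ℝ) ∂μ).toReal := by
    simp_rw [← toReal_enorm, ENNReal.toReal_rpow]
    exact integral_toReal (hf.continuous.enorm.measurable.pow_const _).aemeasurable
      (.of_forall fun x => ENNReal.rpow_lt_top_of_nonneg (by positivity) enorm_ne_top)
  rw [ENNReal.ofReal_rpow_of_pos hδ, ENNReal.ofReal_rpow_of_pos hδ] at hbound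
  have hf_ne_top : ENNReal.ofReal (δ ^ (-1 / p : ℝ)) * eLpNorm f p volume ≠ ∞ :=
    ENNReal.mul_ne_top ENNReal.ofReal_ne_top hfp.eLpNorm_ne_top
  have hf'_ne_top : ENNReal.ofReal (δ ^ (1 - 1 / p : ℝ)) * eLpNorm (deriv f) p volume ≠ ∞ :=
    ENNReal.mul_ne_top ENNReal.ofReal_ne_top hf'p.eLpNorm_ne_top
  rw [hnorm]
  refine (ENNReal.toReal_mono (ENNReal.mul_ne_top hfin (ENNReal.rpow_ne_top_of_nonneg
    (by positivity) (ENNReal.add_ne_top.2 ⟨hf_ne_top, hf'_ne_top⟩))) hbound).trans_eq ?_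
  rw [ENNReal.toReal_mul, ← ENNReal.toReal_rpow, ENNReal.toReal_add hf_ne_top hf'_ne_top,
    ENNReal.toReal_mul, ENNReal.toReal_mul, ENNReal.toReal_ofReal (by positivity),
    ENNReal.toReal_ofReal (by positivity)]
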